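/- arXiv:2204.05408 — 2 statements merged into one kernel-verified Lean document; each statement's English description precedes it below -/
import Mathlib

section
/- Let I be a set of nonnegative real numbers satisfying the descending chain condition. Then the set D(I) := {a ≤ 1 | a = (m − 1 + f)/m for some positive integer m and some f ∈ I^+} also satisfies the descending chain condition. -/
/-- A set of reals satisfies the descending chain condition if it contains
no infinite strictly decreasing sequence. -/
def DCC (S : Set ℝ) : Prop := ¬ ∃ f : ℕ → ℝ, (∀ n, f n ∈ S) ∧ StrictAnti f

/-- A set of reals satisfies the ascending chain condition if it contains
no infinite strictly increasing sequence. -/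
def ACC (S : Set ℝ) : Prop := ¬ ∃ f : ℕ → ℝ, (∀ n, f n ∈ S) ∧ StrictMono f

/-- `I⁺ = {0} ∪ {x ∈ [0,1] | x is a finite (nonempty) sum of elements of I}`. -/
def plusSet (I : Set ℝ) : Set ℝ :=
  {0} ∪ {x | 0 ≤ x ∧ x ≤ 1 ∧ ∃ l : List ℝ, l ≠ [] ∧ (∀ j ∈ l, j ∈ I) ∧ l.sum = x}

/-- `D(I) = {a ≤ 1 | a = (m - 1 + f)/m, m ∈ ℤ_{>0}, f ∈ I⁺}`. -/
def DSet (I : Set ℝ) : Set ℝ :=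
  {a | a ≤ 1 ∧ ∃ m : ℕ, 0 < m ∧ ∃ f ∈ plusSet I, a = ((m : ℝ) - 1 + f) / m}

/-- `D_d(I) = {a ≤ 1 | a = (m - 1 + f + k·d)/m, k, m ∈ ℤ_{>0}, f ∈ I⁺}`. -/
def DdSet (d : ℝ) (I : Set ℝ) : Set ℝ :=
  {a | a ≤ 1 ∧ ∃ k m : ℕ, 0 < k ∧ 0 < m ∧ ∃ f ∈ plusSet I,
    a = ((m : ℝ) - 1 + f + (k : ℝ) * d) / m}

lemma dcc_iff_isWF (S : Set ℝ) : DCC S ↔ S.IsWF := by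
  rw [Set.isWF_iff_no_descending_seq, DCC]
  constructor
  · intro h f hf hmem
    exact h ⟨f, hmem, hf⟩
  · rintro h ⟨f, hmem, hf⟩
    exact h f hf hmem

lemma plusSet_dcc (I : Set ℝ) (hI : ∀ x ∈ I, 0 ≤ x) (hDCC : DCC I) :
    DCC (plusSet I) := by
  rw [dcc_iff_isWF] at hDCC ⊢
  have h1 : (↑(AddSubmonoid.closure I) : Set ℝ).IsPWO :=
    Set.IsPWO.addSubmonoid_closure hI hDCC.isPWO
  have h2 : plusSet I ⊆ ↑(AddSubmonoid.closure I) := by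
    rintro x (rfl | ⟨-, -, l, -, hl, rfl⟩)
    · exact AddSubmonoid.zero_mem _
    · exact AddSubmonoid.list_sum_mem _ fun y hy => AddSubmonoid.subset_closure (hl y hy)
  exact h1.isWF.mono h2

lemma plusSet_nonneg {I : Set ℝ} {x : ℝ} (hx : x ∈ plusSet I) : 0 ≤ x := by
  rcases hx with rfl | ⟨h, -⟩
  · rfl
  · exact h

theorem DSet_DCC (I : Set ℝ) (hI : ∀ x ∈ I, 0 ≤ x) (hDCC : DCC I) :
    DCC (DSet I) := by
  have hplus := plusSet_dcc I hI hDCC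
  rintro ⟨a, ha, hanti⟩
  choose hle m hm f hf heq using ha
  -- for n ≥ 1, a n ≤ a 1 < 1
  have ha1 : a 1 < 1 := lt_of_lt_of_le (hanti zero_lt_one) (hle 0)
  set ε : ℝ := 1 - a 1 with hε
  have hεpos : 0 < ε := by simp [hε]; linarith
  -- bound on m: (m (n+1) : ℝ) ≤ 1/ε
  have hmb : ∀ n : ℕ, (m (n + 1) : ℝ) ≤ 1 / ε := by
    intro n
    have hmn : (0 : ℝ) < m (n + 1) := by exact_mod_cast hm (n + 1)
    have hfge : 0 ≤ f (n + 1) := plusSet_nonneg (hf (n + 1))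
    have han : a (n + 1) ≤ a 1 := hanti.antitone (by omega)
    have : ((m (n + 1) : ℝ) - 1) / m (n + 1) ≤ a (n + 1) := by
      rw [heq (n + 1)]
      exact (div_le_div_iff_of_pos_right hmn).mpr (by linarith)
    rw [div_le_iff₀ hmn] at this
    rw [le_div_iff₀ hεpos]
    nlinarith
  -- pigeonhole: fix m
  set M : ℕ := ⌈(1:ℝ)/ε⌉₊ with hM
  have hmb' : ∀ n : ℕ, m (n + 1) < M + 1 := by
    intro n
    have h1 : (m (n + 1) : ℝ) ≤ (M : ℝ) := le_trans (hmb n) (Nat.le_ceil _)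
    have : m (n + 1) ≤ M := by exact_mod_cast h1
    omega
  obtain ⟨k, hk⟩ := Finite.exists_infinite_fiber
    (fun n : ℕ => (⟨m (n + 1), hmb' n⟩ : Fin (M + 1)))
  rw [Set.infinite_coe_iff] at hk
  set p : ℕ → Prop := fun n => m (n + 1) = (k : ℕ) with hp
  have hpinf : (setOf p).Infinite := by
    apply hk.mono
    intro n hn
    simp only [Set.mem_preimage, Set.mem_singleton_iff] at hn
    exact congrArg Fin.val hn
  have hnth := Nat.nth_strictMono hpinf
  have hnthmem : ∀ j, m (Nat.nth p j + 1) = (k : ℕ) := fun j =>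
    Nat.nth_mem_of_infinite hpinf j
  -- the strictly decreasing sequence in plusSet I
  refine hplus ⟨fun j => f (Nat.nth p j + 1), fun j => hf _, ?_⟩
  intro i j hij
  have hmk : (0 : ℝ) < (k : ℕ) := by
    have := hm (Nat.nth p i + 1)
    rw [hnthmem i] at this
    exact_mod_cast this
  have haij : a (Nat.nth p j + 1) < a (Nat.nth p i + 1) := hanti (by
    have := hnth hij; omega)
  have hei := heq (Nat.nth p i + 1)
  have hej := heq (Nat.nth p j + 1)
  rw [hnthmem i] at hei
  rw [hnthmem j] at hej
  rw [hei, hej, div_lt_div_iff₀ hmk hmk] at haij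
  nlinarith
end

section
/- The set S := {1/p + 1/q + 1/r − 1 | p, q, r ∈ ℤ_{>0}} ∩ [0,1] satisfies the ascending chain condition, i.e., it contains no infinite strictly increasing sequence. -/
/-!
The threshold `1/p + 1/q + 1/r - 1` is antitone in `(p, q, r)` for the product order, and
`ℕ × ℕ × ℕ` is well-quasi-ordered (Dickson's lemma): every sequence of triples has two terms
`x m ≤ x n` with `m < n`, at which the thresholds cannot strictly increase.
-/

theorem ACC.mono {S T : Set ℝ} (hT : ACC T) (hST : S ⊆ T) : ACC S :=
  fun ⟨f, hf, hmono⟩ => hT ⟨f, fun n => hST (hf n), hmono⟩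

theorem acc_image_of_isPWO_of_antitoneOn {α : Type*} [Preorder α] {s : Set α} {F : α → ℝ}
    (hs : s.IsPWO) (hF : AntitoneOn F s) : ACC (F '' s) := by
  rintro ⟨f, hf, hmono⟩
  choose x hxs hFx using hf
  obtain ⟨m, n, hmn, hle⟩ := hs.exists_lt hxs
  have hFle : f n ≤ f m := by simpa only [hFx] using hF (hxs m) (hxs n) hle
  exact (hmono hmn).not_ge hFle

theorem one_div_natCast_antitoneOn : AntitoneOn (fun p : ℕ => 1 / (p : ℝ)) {p | 0 < p} :=
  fun _ hp _ _ hle => one_div_le_one_div_of_le (Nat.cast_pos.mpr hp) (Nat.cast_le.mpr hle)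

noncomputable def platonicThreshold (x : ℕ × ℕ × ℕ) : ℝ :=
  1 / (x.1 : ℝ) + 1 / (x.2.1 : ℝ) + 1 / (x.2.2 : ℝ) - 1

theorem platonicThreshold_antitoneOn :
    AntitoneOn platonicThreshold {x | 0 < x.1 ∧ 0 < x.2.1 ∧ 0 < x.2.2} := by
  rintro ⟨p, q, r⟩ ⟨hp, hq, hr⟩ ⟨p', q', r'⟩ ⟨hp', hq', hr'⟩ ⟨hpp', hqq', hrr'⟩
  have h₁ := one_div_natCast_antitoneOn hp hp' hpp'
  have h₂ := one_div_natCast_antitoneOn hq hq' hqq'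
  have h₃ := one_div_natCast_antitoneOn hr hr' hrr'
  dsimp only [platonicThreshold] at h₁ h₂ h₃ ⊢
  linarith

theorem platonic_thresholds_ACC :
    ACC ({t : ℝ | ∃ p q r : ℕ, 0 < p ∧ 0 < q ∧ 0 < r ∧
      t = 1 / (p : ℝ) + 1 / (q : ℝ) + 1 / (r : ℝ) - 1} ∩ Set.Icc (0:ℝ) 1) := by
  refine (acc_image_of_isPWO_of_antitoneOn (Set.isPWO_of_wellQuasiOrderedLE _)
    platonicThreshold_antitoneOn).mono ?_
  rintro t ⟨⟨p, q, r, hp, hq, hr, rfl⟩, -⟩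
  exact ⟨(p, q, r), ⟨hp, hq, hr⟩, rfl⟩
end
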